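/- arXiv:2201.11602 — 3 statements merged into one kernel-verified Lean document; each statement's English description precedes it below -/
import Mathlib

section
/- Let O be a point in the plane and let A, B, C be three points such that the angles ∠AOB, ∠BOC, ∠COA are all equal to 2π/3. Then every internal angle of triangle ABC is strictly less than 2π/3. -/
open EuclideanGeometry

private lemma abs_toReal_add_le' (θ ψ : Real.Angle) :
    |(θ + ψ).toReal| ≤ |θ.toReal| + |ψ.toReal| := by
  have ha := θ.toReal_mem_Ioc
  have hb := ψ.toReal_mem_Ioc
  obtain ⟨ha1, ha2⟩ := ha
  obtain ⟨hb1, hb2⟩ := hb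
  have hpi : (0:ℝ) < Real.pi := Real.pi_pos
  have hsum : θ + ψ = ((θ.toReal + ψ.toReal : ℝ) : Real.Angle) := by
    rw [Real.Angle.coe_add, θ.coe_toReal, ψ.coe_toReal]
  rw [hsum]
  have h1 := neg_abs_le θ.toReal
  have h2 := neg_abs_le ψ.toReal
  have h3 := le_abs_self θ.toReal
  have h4 := le_abs_self ψ.toReal
  rcases le_or_gt (θ.toReal + ψ.toReal) (-Real.pi) with h | h
  · have heq : ((θ.toReal + ψ.toReal : ℝ) : Real.Angle).toReal
        = θ.toReal + ψ.toReal + 2 * Real.pi := by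
      rw [Real.Angle.toReal_coe_eq_self_add_two_pi_iff]
      constructor <;> [linarith; linarith]
    rw [heq, abs_of_pos (by linarith)]
    linarith
  · rcases le_or_gt (θ.toReal + ψ.toReal) Real.pi with h' | h'
    · have heq : ((θ.toReal + ψ.toReal : ℝ) : Real.Angle).toReal
          = θ.toReal + ψ.toReal := by
        rw [Real.Angle.toReal_coe_eq_self_iff]; exact ⟨h, h'⟩
      rw [heq]
      exact abs_add_le _ _
    · have heq : ((θ.toReal + ψ.toReal : ℝ) : Real.Angle).toReal
          = θ.toReal + ψ.toReal - 2 * Real.pi := by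
        rw [Real.Angle.toReal_coe_eq_self_sub_two_pi_iff]
        constructor <;> [linarith; linarith]
      rw [heq, abs_of_nonpos (by linarith)]
      linarith

private lemma aux_angle_lt (O X Y : EuclideanSpace ℝ (Fin 2)) (hX : O ≠ X) (hY : O ≠ Y)
    (h : ∠ X O Y = 2 * Real.pi / 3) : ∠ Y X O < Real.pi / 3 := by
  have hpi : (0:ℝ) < Real.pi := Real.pi_pos
  have hYX : Y ≠ X := by
    rintro rfl
    rw [EuclideanGeometry.angle_self_of_ne hX.symm] at h
    linarith
  have hsum := EuclideanGeometry.angle_add_angle_add_angle_eq_pi (p₁ := X) (p₂ := O) Y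
    hX
  have hnz : ∠ O Y X ≠ 0 := by
    intro h0
    have hcol : Collinear ℝ ({O, Y, X} : Set (EuclideanSpace ℝ (Fin 2))) := by
      rw [EuclideanGeometry.collinear_iff_eq_or_eq_or_angle_eq_zero_or_angle_eq_pi]
      tauto
    have hcol' : Collinear ℝ ({X, O, Y} : Set (EuclideanSpace ℝ (Fin 2))) := by
      have : ({X, O, Y} : Set (EuclideanSpace ℝ (Fin 2))) = {O, Y, X} := by
        ext z; simp only [Set.mem_insert_iff, Set.mem_singleton_iff]; tauto
      rw [this]; exact hcol
    rw [EuclideanGeometry.collinear_iff_eq_or_eq_or_angle_eq_zero_or_angle_eq_pi] at hcol'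
    rcases hcol' with hc | hc | hc | hc
    · exact hX hc.symm
    · exact hY hc.symm
    · rw [h] at hc; linarith
    · rw [h] at hc; linarith
  have hnn : 0 ≤ ∠ O Y X := EuclideanGeometry.angle_nonneg _ _ _
  have hpos : 0 < ∠ O Y X := lt_of_le_of_ne hnn (Ne.symm hnz)
  rw [h] at hsum
  linarith

private lemma aux_vertex (O X Y Z : EuclideanSpace ℝ (Fin 2))
    (hOX : O ≠ X) (hOY : O ≠ Y) (hOZ : O ≠ Z) (hYX : Y ≠ X) (hZX : Z ≠ X)
    (hXY : ∠ Y O X = 2 * Real.pi / 3) (hXZ : ∠ X O Z = 2 * Real.pi / 3) :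
    ∠ Y X Z < 2 * Real.pi / 3 := by
  haveI : Fact (Module.finrank ℝ (EuclideanSpace ℝ (Fin 2)) = 2) :=
    ⟨finrank_euclideanSpace_fin⟩
  haveI : Module.Oriented ℝ (EuclideanSpace ℝ (Fin 2)) (Fin 2) :=
    ⟨Module.Basis.orientation (EuclideanSpace.basisFun (Fin 2) ℝ).toBasis⟩
  have h1 : ∠ Y X O < Real.pi / 3 := by
    apply aux_angle_lt O X Y hOX hOY
    rw [EuclideanGeometry.angle_comm]; exact hXY
  have h2 : ∠ O X Z < Real.pi / 3 := by
    have := aux_angle_lt O X Z hOX hOZ hXZ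
    rwa [EuclideanGeometry.angle_comm] at this
  have hadd : EuclideanGeometry.oangle Y X O + EuclideanGeometry.oangle O X Z
      = EuclideanGeometry.oangle Y X Z :=
    EuclideanGeometry.oangle_add hYX (fun hh => hOX hh) hZX
  have hYXZ : ∠ Y X Z = |(EuclideanGeometry.oangle Y X Z).toReal| :=
    EuclideanGeometry.angle_eq_abs_oangle_toReal hYX hZX
  have hYXO : ∠ Y X O = |(EuclideanGeometry.oangle Y X O).toReal| :=
    EuclideanGeometry.angle_eq_abs_oangle_toReal hYX (fun hh => hOX hh)
  have hOXZ : ∠ O X Z = |(EuclideanGeometry.oangle O X Z).toReal| :=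
    EuclideanGeometry.angle_eq_abs_oangle_toReal (fun hh => hOX hh) hZX
  calc ∠ Y X Z = |(EuclideanGeometry.oangle Y X O + EuclideanGeometry.oangle O X Z).toReal| := by
        rw [hYXZ, hadd]
    _ ≤ |(EuclideanGeometry.oangle Y X O).toReal| + |(EuclideanGeometry.oangle O X Z).toReal| :=
        abs_toReal_add_le' _ _
    _ = ∠ Y X O + ∠ O X Z := by rw [hYXO, hOXZ]
    _ < Real.pi / 3 + Real.pi / 3 := by linarith
    _ = 2 * Real.pi / 3 := by ring

theorem stmt_4 (A B C O : EuclideanSpace ℝ (Fin 2))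
    (htri : AffineIndependent ℝ ![A, B, C])
    (hOA : O ≠ A) (hOB : O ≠ B) (hOC : O ≠ C)
    (h1 : ∠ A O B = 2 * Real.pi / 3)
    (h2 : ∠ B O C = 2 * Real.pi / 3)
    (h3 : ∠ C O A = 2 * Real.pi / 3) :
    ∠ B A C < 2 * Real.pi / 3 ∧ ∠ A B C < 2 * Real.pi / 3 ∧ ∠ A C B < 2 * Real.pi / 3 := by
  have hinj := htri.injective
  have hAB : A ≠ B := fun h => by
    have : (0 : Fin 3) = 1 := hinj (by simpa [Matrix.cons_val_zero, Matrix.cons_val_one] using h)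
    simp at this
  have hAC : A ≠ C := fun h => by
    have : (0 : Fin 3) = 2 := hinj (by simpa using h)
    simp at this
  have hBC : B ≠ C := fun h => by
    have : (1 : Fin 3) = 2 := hinj (by simpa using h)
    simp at this
  refine ⟨?_, ?_, ?_⟩
  · -- ∠ B A C
    exact aux_vertex O A B C hOA hOB hOC hAB.symm hAC.symm
      (by rwa [EuclideanGeometry.angle_comm]) (by rwa [EuclideanGeometry.angle_comm])
  · -- ∠ A B C
    exact aux_vertex O B A C hOB hOA hOC hAB hBC.symm h1 h2
  · -- ∠ A C B
    exact aux_vertex O C A B hOC hOA hOB hAC hBC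
      (by rwa [EuclideanGeometry.angle_comm]) (by rwa [EuclideanGeometry.angle_comm])
end

section
/- If triangle ABC has an internal angle ∠BAC ≥ 2π/3, then there is no point O in the plane with ∠AOB = ∠BOC = ∠COA = 2π/3. -/
open EuclideanGeometry
open scoped RealInnerProductSpace

private lemma stmt_5_aux (a b c N1 N2 : ℝ) (ha : 0 < a) (hb : 0 < b) (hc : 0 < c)
    (hN1nn : 0 ≤ N1) (hN2nn : 0 ≤ N2)
    (hN1sq : N1 ^ 2 = a ^ 2 + a * b + b ^ 2) (hN2sq : N2 ^ 2 = a ^ 2 + a * c + c ^ 2)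
    (hle : a ^ 2 + a * b / 2 + a * c / 2 - b * c / 2 ≤ -(1/2) * (N1 * N2)) : False := by
  have hN1pos : 0 < N1 := by nlinarith
  have hN2pos : 0 < N2 := by nlinarith
  have hkey : b * c - a * b - a * c - 2 * a ^ 2 < N1 * N2 := by
    by_cases hR : b * c - a * b - a * c - 2 * a ^ 2 ≤ 0
    · nlinarith [mul_pos hN1pos hN2pos]
    · push_neg at hR
      have hbc : a ^ 2 < b * c := by nlinarith
      have hsq : (b * c - a * b - a * c - 2 * a ^ 2) ^ 2 < (N1 * N2) ^ 2 := by
        have hexp : (N1 * N2) ^ 2 = (a ^ 2 + a * b + b ^ 2) * (a ^ 2 + a * c + c ^ 2) := by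
          rw [mul_pow, hN1sq, hN2sq]
        nlinarith [mul_pos (mul_pos ha (show (0:ℝ) < a + b + c by linarith))
          (show (0:ℝ) < b * c - a ^ 2 by linarith)]
      nlinarith [mul_pos hN1pos hN2pos]
  linarith

theorem stmt_5 (A B C : EuclideanSpace ℝ (Fin 2))
    (htri : AffineIndependent ℝ ![A, B, C])
    (hA : 2 * Real.pi / 3 ≤ ∠ B A C) :
    ¬ ∃ O : EuclideanSpace ℝ (Fin 2), O ≠ A ∧ O ≠ B ∧ O ≠ C ∧
      ∠ A O B = 2 * Real.pi / 3 ∧ ∠ B O C = 2 * Real.pi / 3 ∧ ∠ C O A = 2 * Real.pi / 3 := by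
  rintro ⟨O, hOA, hOB, hOC, h1, h2, h3⟩
  set u : EuclideanSpace ℝ (Fin 2) := A -ᵥ O with hu_def
  set v : EuclideanSpace ℝ (Fin 2) := B -ᵥ O with hv_def
  set w : EuclideanSpace ℝ (Fin 2) := C -ᵥ O with hw_def
  have hu : u ≠ 0 := vsub_ne_zero.2 (Ne.symm hOA)
  have hv : v ≠ 0 := vsub_ne_zero.2 (Ne.symm hOB)
  have hw : w ≠ 0 := vsub_ne_zero.2 (Ne.symm hOC)
  set a : ℝ := ‖u‖ with ha_def
  set b : ℝ := ‖v‖ with hb_def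
  set c : ℝ := ‖w‖ with hc_def
  have ha : 0 < a := norm_pos_iff.2 hu
  have hb : 0 < b := norm_pos_iff.2 hv
  have hc : 0 < c := norm_pos_iff.2 hw
  have hcos23 : Real.cos (2 * Real.pi / 3) = -(1/2) := by
    rw [show (2 * Real.pi / 3) = Real.pi - Real.pi / 3 by ring, Real.cos_pi_sub,
      Real.cos_pi_div_three]
  have h1' : InnerProductGeometry.angle u v = 2 * Real.pi / 3 := h1
  have h2' : InnerProductGeometry.angle v w = 2 * Real.pi / 3 := h2
  have h3' : InnerProductGeometry.angle w u = 2 * Real.pi / 3 := h3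
  have huv : (inner ℝ u v : ℝ) = -(a * b) / 2 := by
    have := InnerProductGeometry.cos_angle_mul_norm_mul_norm u v
    rw [h1', hcos23] at this
    linarith [this]
  have hvw : (inner ℝ v w : ℝ) = -(b * c) / 2 := by
    have := InnerProductGeometry.cos_angle_mul_norm_mul_norm v w
    rw [h2', hcos23] at this
    linarith [this]
  have hwu : (inner ℝ w u : ℝ) = -(c * a) / 2 := by
    have := InnerProductGeometry.cos_angle_mul_norm_mul_norm w u
    rw [h3', hcos23] at this
    linarith [this]
  -- The key quantities
  have hBA : B -ᵥ A = v - u := (vsub_sub_vsub_cancel_right B A O).symm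
  have hCA : C -ᵥ A = w - u := (vsub_sub_vsub_cancel_right C A O).symm
  set N1 : ℝ := ‖v - u‖ with hN1_def
  set N2 : ℝ := ‖w - u‖ with hN2_def
  have hN1sq : N1 ^ 2 = a ^ 2 + a * b + b ^ 2 := by
    rw [hN1_def, norm_sub_sq_real, real_inner_comm u v, huv]
    ring
  have hN2sq : N2 ^ 2 = a ^ 2 + a * c + c ^ 2 := by
    rw [hN2_def, norm_sub_sq_real, hwu]
    ring
  have hI : (inner ℝ (v - u) (w - u) : ℝ) = a ^ 2 + (a * b) / 2 + (a * c) / 2 - (b * c) / 2 := by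
    simp only [inner_sub_left, inner_sub_right]
    rw [real_inner_comm u v, real_inner_comm w u, real_inner_self_eq_norm_sq, huv, hvw, hwu]
    ring
  have hcosBAC : Real.cos (∠ B A C) * (N1 * N2) = (inner ℝ (v - u) (w - u) : ℝ) := by
    have : ∠ B A C = InnerProductGeometry.angle (v - u) (w - u) := by
      rw [EuclideanGeometry.angle, hBA, hCA]
    rw [this, hN1_def, hN2_def]
    exact InnerProductGeometry.cos_angle_mul_norm_mul_norm (v - u) (w - u)
  have hcosle : Real.cos (∠ B A C) ≤ -(1/2) := by
    calc Real.cos (∠ B A C) ≤ Real.cos (2 * Real.pi / 3) :=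
          Real.cos_le_cos_of_nonneg_of_le_pi (by positivity) (angle_le_pi B A C) hA
      _ = -(1/2) := hcos23
  have hNN : (0:ℝ) ≤ N1 * N2 := mul_nonneg (norm_nonneg _) (norm_nonneg _)
  have hfin : (inner ℝ (v - u) (w - u) : ℝ) ≤ -(1/2) * (N1 * N2) := by
    rw [← hcosBAC]
    have h2 := mul_le_mul_of_nonneg_right hcosle hNN
    linarith
  rw [hI] at hfin
  exact stmt_5_aux a b c N1 N2 ha hb hc (norm_nonneg _) (norm_nonneg _) hN1sq hN2sq hfin
end

section
/- Let A, B, C be the vertices of a triangle with Steiner point O (∠AOB = ∠BOC = ∠COA = 2π/3), and suppose ∠BAC ≥ ∠ABC ≥ ∠ACB. Then |OA| ≤ |OB| ≤ |OC|. -/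
open EuclideanGeometry

/-- In a triangle, a larger angle is opposite a larger side. -/
lemma side_le_of_angle_le (P Q R : EuclideanSpace ℝ (Fin 2))
    (hPQ : P ≠ Q) (hPR : P ≠ R) (hQR : Q ≠ R)
    (hstrict : dist P Q < dist Q R + dist P R)
    (h : ∠ P Q R ≤ ∠ Q P R) : dist P R ≤ dist Q R := by
  have e1 := EuclideanGeometry.law_cos Q P R
  have e2 := EuclideanGeometry.law_cos P Q R
  have hcos : Real.cos (∠ Q P R) ≤ Real.cos (∠ P Q R) := by
    rcases eq_or_lt_of_le h with h' | h'
    · rw [h']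
    · exact le_of_lt (Real.cos_lt_cos_of_nonneg_of_le_pi (angle_nonneg _ _ _)
        (angle_le_pi _ _ _) h')
  have ha : 0 < dist Q R := dist_pos.2 hQR
  have hb : 0 < dist P R := dist_pos.2 hPR
  have hc : 0 < dist P Q := dist_pos.2 hPQ
  rw [dist_comm Q P, dist_comm R P] at e1
  rw [dist_comm R Q] at e2
  set a := dist Q R
  set b := dist P R
  set c := dist P Q
  -- e1 : a^2 = c^2 + b^2 - 2*c*b*cos(∠QPR), e2 : b^2 = c^2 + a^2 - 2*c*a*cos(∠PQR)
  have e1a : a * (a * a) = a * (c * c + b * b - 2 * c * b * Real.cos (∠ Q P R)) := by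
    rw [← e1]
  have e2b : b * (b * b) = b * (c * c + a * a - 2 * c * a * Real.cos (∠ P Q R)) := by
    rw [← e2]
  have hcos2 : 2 * a * b * c * Real.cos (∠ Q P R) ≤ 2 * a * b * c * Real.cos (∠ P Q R) :=
    mul_le_mul_of_nonneg_left hcos (by positivity)
  have hkey : a * (c * c + b * b - a * a) ≤ b * (c * c + a * a - b * b) := by nlinarith
  have hprod : 0 < (a + b - c) * (a + b + c) := by
    apply mul_pos <;> linarith
  nlinarith [hkey, hprod]

theorem stmt_18 (A B C O : EuclideanSpace ℝ (Fin 2))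
    (htri : AffineIndependent ℝ ![A, B, C])
    (hOA : O ≠ A) (hOB : O ≠ B) (hOC : O ≠ C)
    (h1 : ∠ A O B = 2 * Real.pi / 3)
    (h2 : ∠ B O C = 2 * Real.pi / 3)
    (h3 : ∠ C O A = 2 * Real.pi / 3)
    (hAB : ∠ A B C ≤ ∠ B A C) (hBC : ∠ A C B ≤ ∠ A B C) :
    dist O A ≤ dist O B ∧ dist O B ≤ dist O C := by
  have hncol : ¬ Collinear ℝ ({A, B, C} : Set (EuclideanSpace ℝ (Fin 2))) := by
    rw [affineIndependent_iff_not_collinear_set] at htri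
    exact htri
  have hinj := htri.injective
  have hABne : A ≠ B := by
    have := hinj.ne (show (0 : Fin 3) ≠ 1 by decide); simpa using this
  have hACne : A ≠ C := by
    have := hinj.ne (show (0 : Fin 3) ≠ 2 by decide); simpa using this
  have hBCne : B ≠ C := by
    have := hinj.ne (show (1 : Fin 3) ≠ 2 by decide); simpa using this
  -- strict triangle inequality
  have strict : ∀ P Q R : EuclideanSpace ℝ (Fin 2),
      (({A, B, C} : Set (EuclideanSpace ℝ (Fin 2))) ⊆ {P, Q, R}) →
      dist P Q < dist Q R + dist P R := by
    intro P Q R hset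
    have h3 : dist P Q ≤ dist P R + dist R Q := dist_triangle P R Q
    rcases lt_or_eq_of_le h3 with h | h
    · rw [dist_comm R Q] at h; linarith
    · exfalso
      have hw : Wbtw ℝ P R Q := dist_add_dist_eq_iff.1 h.symm
      refine hncol (hw.collinear.subset ?_)
      intro x hx
      have := hset hx
      simp at this ⊢; tauto
  have sBC : dist A C ≤ dist B C := by
    refine side_le_of_angle_le A B C hABne hACne hBCne ?_ hAB
    exact strict A B C (by intro x hx; exact hx)
  have sAC : dist A B ≤ dist A C := by
    have h' : ∠ B C A ≤ ∠ C B A := by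
      rwa [EuclideanGeometry.angle_comm B C A, EuclideanGeometry.angle_comm C B A]
    have := side_le_of_angle_le B C A hBCne hABne.symm hACne.symm
      (strict B C A (by intro x hx; simp at hx ⊢; tauto)) h'
    rwa [dist_comm B A, dist_comm C A] at this
  -- law of cosines at O with cos(2π/3) = -1/2
  have hcos23 : Real.cos (2 * Real.pi / 3) = -(1/2) := by
    have : (2 * Real.pi / 3) = Real.pi - Real.pi / 3 := by ring
    rw [this, Real.cos_pi_sub, Real.cos_pi_div_three]
  have eAB := EuclideanGeometry.law_cos A O B
  have eBC := EuclideanGeometry.law_cos B O C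
  have eCA := EuclideanGeometry.law_cos C O A
  rw [h1, hcos23] at eAB
  rw [h2, hcos23] at eBC
  rw [h3, hcos23] at eCA
  rw [dist_comm A O, dist_comm B O] at eAB
  rw [dist_comm B O, dist_comm C O] at eBC
  rw [dist_comm C O, dist_comm A O, dist_comm C A] at eCA
  have hx : 0 < dist O A := dist_pos.2 hOA
  have hy : 0 < dist O B := dist_pos.2 hOB
  have hz : 0 < dist O C := dist_pos.2 hOC
  have sBC2 : dist A C * dist A C ≤ dist B C * dist B C :=
    mul_self_le_mul_self dist_nonneg sBC
  have sAC2 : dist A B * dist A B ≤ dist A C * dist A C :=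
    mul_self_le_mul_self dist_nonneg sAC
  have key1 : dist O C * dist O C + dist O A * dist O A + dist O C * dist O A ≤
      dist O B * dist O B + dist O C * dist O C + dist O B * dist O C := by
    linarith [sBC2, eBC, eCA]
  have key2 : dist O A * dist O A + dist O B * dist O B + dist O A * dist O B ≤
      dist O C * dist O C + dist O A * dist O A + dist O C * dist O A := by
    linarith [sAC2, eAB, eCA]
  constructor
  · nlinarith [key1, hx, hy, hz]
  · nlinarith [key2, hx, hy, hz]
end
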